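/- Define 𝒥(q) := (1/I₀(q))·Σ_{d≥0} q^d · (Π_{j=1}^{5d}(5H + jz − t)) / (Π_{k=1}^{d}(H + kz)⁵), an element of (ℚ(t,z)[H]/(H⁵))[[q]] (each (H + kz)^{−1} expanded as a polynomial in H over ℚ(t,z) using H⁵ = 0); this is I(t,q,z)/(z·I₀). Apply the operator f ↦ (1/I_{1,1})·( z·q·∂f/∂q + H·f − I_{1,1;a}·t·f ) to 𝒥 and then substitute z := t − 5H (legitimate since each H + k(t − 5H) = kt + (1−5k)H is invertible in ℚ(t)[H]/(H⁵)). The result equals (L/(I₀·I_{1,1}))·( (L⁴ + 5𝒳)·H − (L⁴/5 + 𝒬 + 𝒳)·t ) in (ℚ(t)[H]/(H⁵))[[q]]. (This is the explicit closed formula for the first column S̄₁ = S*(z)(H)|_{z = t−5H} of the modified S-matrix of the twisted theory, obtained by Birkhoff factorization from the I-function.) -/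

import Mathlib

noncomputable section

open LaurentPolynomial

/-! ### Scalar power series -/

/-- The operator `q·d/dq` on formal power series in `q`. -/
def qd (f : PowerSeries ℚ) : PowerSeries ℚ :=
  PowerSeries.mk fun n => (n : ℚ) * PowerSeries.coeff n f

/-- `I₀(q) = Σ_{d≥0} ((5d)!/(d!)⁵) q^d`. -/
def I0 : PowerSeries ℚ :=
  PowerSeries.mk fun d => (Nat.factorial (5 * d) : ℚ) / ((Nat.factorial d : ℚ)) ^ 5

/-- `I₁(q) = Σ_{d≥1} ((5d)!/(d!)⁵)(5 Σ_{j=d+1}^{5d} 1/j) q^d`. -/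
def I1 : PowerSeries ℚ :=
  PowerSeries.mk fun d =>
    (Nat.factorial (5 * d) : ℚ) / ((Nat.factorial d : ℚ)) ^ 5 *
      (5 * ∑ j ∈ Finset.Icc (d + 1) (5 * d), (1 : ℚ) / j)

/-- `I_{1,1} = 1 + q·d/dq (I₁/I₀)`. -/
def I11 : PowerSeries ℚ := 1 + qd (I1 * I0⁻¹)

/-- `I_{1;a}(q) = -Σ_{d≥1} ((5d)!/(d!)⁵)(Σ_{j=1}^{5d} 1/j) q^d`. -/
def I1a : PowerSeries ℚ :=
  PowerSeries.mk fun d =>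
    -((Nat.factorial (5 * d) : ℚ) / ((Nat.factorial d : ℚ)) ^ 5 *
      ∑ j ∈ Finset.Icc 1 (5 * d), (1 : ℚ) / j)

/-- `I_{1,1;a} = q·d/dq (I_{1;a}/I₀)`. -/
def I11a : PowerSeries ℚ := qd (I1a * I0⁻¹)

/-- The generator `𝒳 = (1/L)(q I₀'/I₀ − q L'/L)`. -/
def Xgen (L : PowerSeries ℚ) : PowerSeries ℚ :=
  L⁻¹ * (qd I0 * I0⁻¹ - qd L * L⁻¹)

/-- The extra generator `𝒬 = (1/L)(I_{1,1;a} − 1/5)`. -/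
def Qgen (L : PowerSeries ℚ) : PowerSeries ℚ :=
  L⁻¹ * (I11a - PowerSeries.C (1 / 5 : ℚ))

/-! ### The coefficient rings `ℚ(t)[H]/(H⁵)` and its Laurent extension in `z` -/

/-- The field `ℚ(t)` of rational functions in `t`. -/
abbrev F : Type := RatFunc ℚ

/-- The ring `ℚ(t)[H]/(H⁵)`. -/
abbrev Aring : Type := Polynomial F ⧸ Ideal.span ({Polynomial.X ^ 5} : Set (Polynomial F))

/-- The class `H`. -/
def HA : Aring := Ideal.Quotient.mk _ Polynomial.X

/-- The element `t`. -/
def tA : Aring := algebraMap F Aring RatFunc.X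

/-- The ring `(ℚ(t)[H]/(H⁵))[z, z⁻¹]`, in which the coefficients of the twisted
`I`-function live (each coefficient is a Laurent polynomial in `z`). -/
abbrev RA : Type := LaurentPolynomial Aring

/-- The variable `z`. -/
def zR : RA := T 1

/-- `H` viewed in `RA`. -/
def HR : RA := LaurentPolynomial.C HA

/-- `t` viewed in `RA`. -/
def tR : RA := LaurentPolynomial.C tA

/-- The expansion of `(H + kz)⁻¹` as `Σ_{i=0}^{4} (−1)^i H^i (kz)^{−i−1}` (using `H⁵ = 0`). -/
def Einv (k : ℕ) : RA :=
  ∑ i ∈ Finset.range 5,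
    (-1 : RA) ^ i * HR ^ i * algebraMap ℚ RA (1 / (k : ℚ) ^ (i + 1)) * T (-(i + 1) : ℤ)

/-- Embedding of scalar power series into `RA[[q]]`. -/
def eR : PowerSeries ℚ →+* PowerSeries RA := PowerSeries.map (algebraMap ℚ RA)

/-- Embedding of scalar power series into `Aring[[q]]`. -/
def eA : PowerSeries ℚ →+* PowerSeries Aring := PowerSeries.map (algebraMap ℚ Aring)

/-- `𝒥(q) = (1/I₀)·Σ_{d≥0} q^d (Π_{j=1}^{5d}(5H + jz − t)) / (Π_{k=1}^{d}(H + kz)⁵)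
  = I(t,q,z)/(z·I₀)`. -/
def Jfun : PowerSeries RA :=
  eR I0⁻¹ *
    PowerSeries.mk fun d =>
      (∏ j ∈ Finset.Icc 1 (5 * d), (5 * HR + (j : RA) * zR - tR))
        * ∏ k ∈ Finset.Icc 1 d, (Einv k) ^ 5

/-- The Birkhoff-factorization operator
`f ↦ (1/I_{1,1})·( z·q·∂f/∂q + H·f − I_{1,1;a}·t·f )`. -/
def Op (f : PowerSeries RA) : PowerSeries RA :=
  eR I11⁻¹ *
    ((PowerSeries.mk fun n => (n : RA) * zR * PowerSeries.coeff n f)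
      + PowerSeries.C HR * f - eR I11a * PowerSeries.C tR * f)

/-- `t − 5H` is a unit in `ℚ(t)[H]/(H⁵)` (explicit geometric-series inverse). -/
def uSub : Aringˣ :=
  letI w : Aring := algebraMap F Aring (RatFunc.X)⁻¹
  { val := tA - 5 * HA
    inv := w + 5 * HA * w ^ 2 + 25 * HA ^ 2 * w ^ 3 + 125 * HA ^ 3 * w ^ 4
      + 625 * HA ^ 4 * w ^ 5
    val_inv := by
      have htw : tA * (algebraMap F Aring (RatFunc.X)⁻¹) = 1 := by
        rw [tA, ← map_mul, mul_inv_cancel₀ RatFunc.X_ne_zero, map_one]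
      have h5 : HA ^ 5 = 0 := by
        rw [HA, ← map_pow, Ideal.Quotient.eq_zero_iff_mem]
        exact Ideal.subset_span (Set.mem_singleton _)
      set w : Aring := algebraMap F Aring (RatFunc.X)⁻¹ with hw
      linear_combination (1 + 5 * HA * w + 25 * HA ^ 2 * w ^ 2 + 125 * HA ^ 3 * w ^ 3
          + 625 * HA ^ 4 * w ^ 4) * htw - 3125 * w ^ 5 * h5
    inv_val := by
      have htw : tA * (algebraMap F Aring (RatFunc.X)⁻¹) = 1 := by
        rw [tA, ← map_mul, mul_inv_cancel₀ RatFunc.X_ne_zero, map_one]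
      have h5 : HA ^ 5 = 0 := by
        rw [HA, ← map_pow, Ideal.Quotient.eq_zero_iff_mem]
        exact Ideal.subset_span (Set.mem_singleton _)
      set w : Aring := algebraMap F Aring (RatFunc.X)⁻¹ with hw
      linear_combination (1 + 5 * HA * w + 25 * HA ^ 2 * w ^ 2 + 125 * HA ^ 3 * w ^ 3
          + 625 * HA ^ 4 * w ^ 4) * htw - 3125 * w ^ 5 * h5 }

/-- The substitution homomorphism `z ↦ t − 5H`, an `Aring`-algebra map
`(ℚ(t)[H]/(H⁵))[z,z⁻¹] → ℚ(t)[H]/(H⁵)`. -/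
def subst : RA →ₐ[Aring] Aring :=
  AddMonoidAlgebra.lift Aring Aring ℤ ((Units.coeHom Aring).comp (zpowersHom Aringˣ uSub))

/-! Substituting `z = t − 5H` kills the factor `5H + z − t` (the `j = 1` factor) of every
`d ≥ 1` term of `𝒥`, so `𝒥` specialises to `1/I₀`; since the substitution acts coefficientwise
in `q`, it commutes with `q·d/dq`, and the claim reduces to two identities between scalar
power series. These follow from `q·d/dq (1/I₀) = −(q·d/dq I₀)/I₀²` and from differentiating
`L⁵(1 − 5⁵q) = 1`, which gives `5·q·L'/L = L⁵ − 1`. -/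

open PowerSeries hiding subst

theorem qd_eq_X_mul_derivative (f : PowerSeries ℚ) : qd f = X * d⁄dX ℚ f := by
  ext n
  rcases n with _ | n
  · simp [qd]
  · rw [qd, coeff_mk, coeff_succ_X_mul, coeff_derivative]
    push_cast
    ring

theorem qd_inv (f : PowerSeries ℚ) : qd f⁻¹ = -f⁻¹ ^ 2 * qd f := by
  rw [qd_eq_X_mul_derivative, qd_eq_X_mul_derivative, derivative_inv']
  ring

theorem five_mul_qd_of_pow_five_mul_eq_one {L : PowerSeries ℚ}
    (hL : L ^ 5 * (1 - 5 ^ 5 * X) = 1) : 5 * qd L = L ^ 6 - L := by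
  have hderiv : d⁄dX ℚ (L ^ 5 * (1 - 5 ^ 5 * X)) = 0 := by rw [hL, derivative_one]
  have h5 : d⁄dX ℚ (5 : PowerSeries ℚ) = 0 := by exact_mod_cast (d⁄dX ℚ).map_natCast 5
  simp only [Derivation.leibniz, Derivation.leibniz_pow, map_sub, derivative_one, h5,
    derivative_X, smul_eq_mul, nsmul_eq_mul] at hderiv
  norm_num at hderiv
  rw [qd_eq_X_mul_derivative]
  linear_combination X * L * hderiv - (5 * X * d⁄dX ℚ L + L) * hL

theorem five_mul_C_one_fifth : (5 : PowerSeries ℚ) * PowerSeries.C (1 / 5 : ℚ) = 1 := by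
  rw [← map_ofNat PowerSeries.C 5, ← map_mul, ← map_one PowerSeries.C]
  norm_num

section Generators

variable {L : PowerSeries ℚ}

theorem L_mul_Xgen (hc : constantCoeff L = 1) (hL : L ^ 5 * (1 - 5 ^ 5 * X) = 1) :
    5 * (L * Xgen L) = 5 * qd I0 * I0⁻¹ - (L ^ 5 - 1) := by
  have hLL : L * L⁻¹ = 1 := PowerSeries.mul_inv_cancel L (by simp [hc])
  rw [Xgen]
  linear_combination 5 * qd I0 * I0⁻¹ * hLL - L * L⁻¹ ^ 2 * five_mul_qd_of_pow_five_mul_eq_one hL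
    - (L * L⁻¹ + 1) * (L ^ 5 - 1) * hLL

theorem L_mul_Qgen (hc : constantCoeff L = 1) :
    L * Qgen L = I11a - PowerSeries.C (1 / 5 : ℚ) := by
  rw [Qgen, ← mul_assoc, PowerSeries.mul_inv_cancel L (by simp [hc]), one_mul]

theorem closedForm_H_coeff (hc : constantCoeff L = 1) (hL : L ^ 5 * (1 - 5 ^ 5 * X) = 1) :
    I11⁻¹ * (I0⁻¹ - 5 * qd I0⁻¹) = L * (I0 * I11)⁻¹ * (L ^ 4 + 5 * Xgen L) := by
  rw [PowerSeries.mul_inv_rev]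
  linear_combination -5 * I11⁻¹ * qd_inv I0 - I11⁻¹ * I0⁻¹ * L_mul_Xgen hc hL

theorem closedForm_t_coeff (hc : constantCoeff L = 1) (hL : L ^ 5 * (1 - 5 ^ 5 * X) = 1) :
    I11⁻¹ * (I11a * I0⁻¹ - qd I0⁻¹) =
      L * (I0 * I11)⁻¹ * (PowerSeries.C (1 / 5 : ℚ) * L ^ 4 + Qgen L + Xgen L) := by
  rw [PowerSeries.mul_inv_rev]
  linear_combination -I11⁻¹ * qd_inv I0 - I11⁻¹ * I0⁻¹ * L_mul_Qgen hc
    - I11⁻¹ * I0⁻¹ * PowerSeries.C (1 / 5 : ℚ) * L_mul_Xgen hc hL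
    + I11⁻¹ * I0⁻¹ * (L * Xgen L - I0⁻¹ * qd I0) * five_mul_C_one_fifth

end Generators

theorem subst_C (a : Aring) : subst (LaurentPolynomial.C a) = a := by
  rw [LaurentPolynomial.C_eq_algebraMap]
  exact subst.commutes a

theorem subst_zR : subst zR = tA - 5 * HA := by
  refine (AddMonoidAlgebra.lift_of' (R := Aring) _ _).trans ?_
  simp [uSub]

theorem map_subst_eR (f : PowerSeries ℚ) : map (subst : RA →+* Aring) (eR f) = eA f := by
  rw [eR, eA, ← RingHom.comp_apply, ← PowerSeries.map_comp]
  congr 2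
  exact Subsingleton.elim _ _

theorem subst_prod_eq_zero {d : ℕ} (hd : d ≠ 0) :
    subst (∏ j ∈ Finset.Icc 1 (5 * d), (5 * HR + (j : RA) * zR - tR)) = 0 := by
  rw [map_prod]
  refine Finset.prod_eq_zero (i := 1) (Finset.mem_Icc.mpr ⟨le_rfl, by omega⟩) ?_
  simp only [map_sub, map_add, map_mul, map_ofNat, map_natCast, HR, tR, subst_C, subst_zR]
  ring

theorem map_subst_Jfun : map (subst : RA →+* Aring) Jfun = eA I0⁻¹ := by
  rw [Jfun, map_mul, map_subst_eR]
  convert mul_one (eA I0⁻¹) using 2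
  ext (_ | d)
  · simp
  · rw [coeff_map, coeff_mk, coeff_one, if_neg d.succ_ne_zero, RingHom.coe_coe, map_mul,
      subst_prod_eq_zero d.succ_ne_zero, zero_mul]

theorem map_subst_z_qd {f : PowerSeries RA} {g : PowerSeries ℚ}
    (h : map (subst : RA →+* Aring) f = eA g) :
    map (subst : RA →+* Aring) (mk fun n => (n : RA) * zR * coeff n f) =
      PowerSeries.C (tA - 5 * HA) * eA (qd g) := by
  ext n
  have hn := congrArg (coeff n) h
  rw [coeff_map, RingHom.coe_coe] at hn
  simp only [coeff_map, coeff_mk, RingHom.coe_coe, map_mul, map_natCast, subst_zR, hn,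
    coeff_C_mul, eA, qd]
  ring

/-- Applying the operator
`f ↦ (1/I_{1,1})( z·q·∂f/∂q + H·f − I_{1,1;a}·t·f )` to `𝒥 = I(t,q,z)/(z·I₀)` and then
substituting `z := t − 5H` yields
`(L/(I₀·I_{1,1}))·( (L⁴ + 5𝒳)·H − (L⁴/5 + 𝒬 + 𝒳)·t )`.
This is the closed formula for the first column `S̄₁` of the modified `S`-matrix. -/
theorem statement14 (L : PowerSeries ℚ)
    (hc : PowerSeries.constantCoeff L = 1)
    (hL : L ^ 5 * (1 - 5 ^ 5 * PowerSeries.X) = 1) :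
    PowerSeries.map (subst : RA →+* Aring) (Op Jfun) =
      eA (L * (I0 * I11)⁻¹ * (L ^ 4 + 5 * Xgen L)) * PowerSeries.C HA
        - eA (L * (I0 * I11)⁻¹ * (PowerSeries.C (1 / 5 : ℚ) * L ^ 4 + Qgen L + Xgen L))
            * PowerSeries.C tA := by
  have hOp : PowerSeries.map (subst : RA →+* Aring) (Op Jfun) =
      eA I11⁻¹ * (PowerSeries.C (tA - 5 * HA) * eA (qd I0⁻¹) + PowerSeries.C HA * eA I0⁻¹
        - eA I11a * PowerSeries.C tA * eA I0⁻¹) := by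
    simp only [Op, map_mul, map_add, map_sub, map_C, map_subst_eR, map_subst_Jfun,
      map_subst_z_qd map_subst_Jfun, HR, tR, RingHom.coe_coe, subst_C]
  rw [hOp, ← closedForm_H_coeff hc hL, ← closedForm_t_coeff hc hL]
  simp only [map_mul, map_sub, map_ofNat]
  ring

end
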